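/- Let (A, ·) be a perm algebra and r ∈ A ⊗ A such that r − σ(r) is (R, ad)-invariant. Then r is a solution of the perm Yang-Baxter equation if and only if T_{σ(r)}(a*) · T_{σ(r)}(b*) = T_{σ(r)}(L*(Tᵣ(a*))b* + ad*(T_{σ(r)}(b*))a*) for all a*, b* ∈ A*. -/

import Mathlib

open TensorProduct

section
variable {K : Type*} [Field K] {A : Type*} [AddCommGroup A] [Module K A]

/-- perm identity for a plain binary operation -/
def IsPermFn {X : Type*} (mu : X → X → X) : Prop :=
  ∀ a b c : X, mu a (mu b c) = mu (mu a b) c ∧ mu (mu a b) c = mu (mu b a) c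

/-- perm algebra: bundled bilinear multiplication satisfying the perm identities -/
def IsPermMul (m : A →ₗ[K] A →ₗ[K] A) : Prop :=
  ∀ a b c : A, m a (m b c) = m (m a b) c ∧ m (m a b) c = m (m b a) c

/-- The map `T_r : A* → A` associated with a 2-tensor `r ∈ A ⊗ A`,
`T_r(a*) = Σ ⟨a*, a_i⟩ b_i` for `r = Σ a_i ⊗ b_i`. -/
noncomputable def Tten (r : A ⊗[K] A) : Module.Dual K A →ₗ[K] A :=
  TensorProduct.lift (LinearMap.mk₂ K
    (fun a b => (Module.Dual.eval K A a).smulRight b)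
    (by intro a a' b; ext f; simp [add_smul])
    (by intro c a b; ext f; simp [mul_smul])
    (by intro a b b'; ext f; simp [smul_add])
    (by intro c a b; ext f; simp [smul_comm c])) r

noncomputable def mulT (m : A →ₗ[K] A →ₗ[K] A) : A ⊗[K] A →ₗ[K] A := TensorProduct.lift m

noncomputable def p13_23 (m : A →ₗ[K] A →ₗ[K] A) :
    (A ⊗[K] A) ⊗[K] (A ⊗[K] A) →ₗ[K] (A ⊗[K] A) ⊗[K] A :=
  (TensorProduct.map LinearMap.id (mulT m)) ∘ₗ
    (TensorProduct.tensorTensorTensorComm K A A A A).toLinearMap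

noncomputable def p12_13 (m : A →ₗ[K] A →ₗ[K] A) :
    (A ⊗[K] A) ⊗[K] (A ⊗[K] A) →ₗ[K] (A ⊗[K] A) ⊗[K] A :=
  (TensorProduct.assoc K A A A).symm.toLinearMap ∘ₗ
    (TensorProduct.map (mulT m) LinearMap.id) ∘ₗ
    (TensorProduct.tensorTensorTensorComm K A A A A).toLinearMap

noncomputable def p13_12 (m : A →ₗ[K] A →ₗ[K] A) :
    (A ⊗[K] A) ⊗[K] (A ⊗[K] A) →ₗ[K] (A ⊗[K] A) ⊗[K] A :=
  (TensorProduct.assoc K A A A).symm.toLinearMap ∘ₗ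
    (TensorProduct.map (mulT m) (TensorProduct.comm K A A).toLinearMap) ∘ₗ
    (TensorProduct.tensorTensorTensorComm K A A A A).toLinearMap

noncomputable def p12_23 (m : A →ₗ[K] A →ₗ[K] A) :
    (A ⊗[K] A) ⊗[K] (A ⊗[K] A) →ₗ[K] (A ⊗[K] A) ⊗[K] A :=
  (TensorProduct.assoc K A A A).symm.toLinearMap ∘ₗ
    (TensorProduct.leftComm K A A A).toLinearMap ∘ₗ
    (TensorProduct.map (mulT m) LinearMap.id) ∘ₗ
    (TensorProduct.tensorTensorTensorComm K A A A A).toLinearMap ∘ₗ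
    (TensorProduct.map (TensorProduct.comm K A A).toLinearMap LinearMap.id)

/-- `[[r,r]] = r₁₂·r₂₃ − r₁₃·r₂₃ + r₁₂·r₁₃ − r₁₃·r₁₂` -/
noncomputable def ybrac (m : A →ₗ[K] A →ₗ[K] A) (r : A ⊗[K] A) : (A ⊗[K] A) ⊗[K] A :=
  p12_23 m (r ⊗ₜ r) - p13_23 m (r ⊗ₜ r) + p12_13 m (r ⊗ₜ r) - p13_12 m (r ⊗ₜ r)

/-- the perm Yang-Baxter equation -/
noncomputable def IsPYBESol (m : A →ₗ[K] A →ₗ[K] A) (r : A ⊗[K] A) : Prop := ybrac m r = 0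

/-- `(id ⊗ R(a) − ad(a) ⊗ id)(s) = 0` for all `a`. -/
def RadInv (m : A →ₗ[K] A →ₗ[K] A) (s : A ⊗[K] A) : Prop :=
  ∀ a : A, TensorProduct.map LinearMap.id (m.flip a) s
    = TensorProduct.map (m a - m.flip a) LinearMap.id s

variable {V : Type*} [AddCommGroup V] [Module K V]

/-- representation of a perm algebra -/
def IsPermRep (m : A →ₗ[K] A →ₗ[K] A) (l rr : A →ₗ[K] V →ₗ[K] V) : Prop :=
  ∀ a b : A, l (m a b) = l a ∘ₗ l b ∧ l a ∘ₗ l b = l b ∘ₗ l a ∧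
    rr (m a b) = rr b ∘ₗ rr a ∧ rr b ∘ₗ rr a = rr b ∘ₗ l a ∧ rr b ∘ₗ l a = l a ∘ₗ rr b

/-- A-perm algebra -/
def IsAPermAlg (m : A →ₗ[K] A →ₗ[K] A) (l rr : A →ₗ[K] V →ₗ[K] V)
    (mV : V →ₗ[K] V →ₗ[K] V) : Prop :=
  IsPermRep m l rr ∧ IsPermMul mV ∧
  (∀ (a : A) (u w : V), rr a (mV u w) = rr a (mV w u) ∧ rr a (mV u w) = mV u (rr a w)) ∧
  (∀ (a : A) (u w : V), mV (l a u) w = mV (rr a u) w ∧ mV (l a u) w = l a (mV u w) ∧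
    l a (mV u w) = mV u (l a w))

/-
Contracting the first two legs of a 3-tensor against `f ⊗ g` is a separating family of maps,
and it turns the four terms of `[[r,r]]` into `T_r(L(T_r f)* g)`, `T_r f · T_r g`,
`T_r(L(T_{σr} g)* f)` and `T_r(R(T_{σr} g)* f)`. Write `T_r = T_{σr} + T_D` with
`D = r − σ(r)`. Contracting the invariance of `D` gives `T_D(ad(a)* f) = T_D(f)·a`; since `D`
is antisymmetric, applying `σ` gives `T_D(R(a)* f) = ad(a) T_D(f)` as well, hence
`T_D(L(a)* f) = a·T_D(f)`. With these, all `T_D` terms cancel and the contraction of `[[r,r]]`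
is exactly the difference of the two sides of the operator identity.
-/

section Contraction

variable {U W : Type*} [AddCommGroup U] [Module K U] [AddCommGroup W] [Module K W]

lemma LinearMap.dualMap_add_apply (φ ψ : U →ₗ[K] V) (g : Module.Dual K V) :
    (φ + ψ).dualMap g = φ.dualMap g + ψ.dualMap g := by
  ext; simp

lemma LinearMap.dualMap_sub_apply (φ ψ : U →ₗ[K] V) (g : Module.Dual K V) :
    (φ - ψ).dualMap g = φ.dualMap g - ψ.dualMap g := by
  ext; simp

namespace TensorProduct

noncomputable def contractFst (f : Module.Dual K V) : V ⊗[K] W →ₗ[K] W :=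
  TensorProduct.lid K W ∘ₗ f.rTensor W

@[simp] lemma contractFst_tmul (f : Module.Dual K V) (v : V) (w : W) :
    contractFst f (v ⊗ₜ[K] w) = f v • w := rfl

@[simp] lemma contractFst_zero (x : V ⊗[K] W) : contractFst (0 : Module.Dual K V) x = 0 := by
  simp [contractFst]

lemma contractFst_add (f g : Module.Dual K V) (x : V ⊗[K] W) :
    contractFst (f + g) x = contractFst f x + contractFst g x := by
  simp [contractFst, LinearMap.rTensor_add]

lemma contractFst_map_right (f : Module.Dual K V) (ψ : U →ₗ[K] W) (x : V ⊗[K] U) :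
    contractFst f (map LinearMap.id ψ x) = ψ (contractFst f x) := by
  induction x using TensorProduct.induction_on with
  | zero => simp
  | tmul v u => simp
  | add x y hx hy => simp [hx, hy]

lemma contractFst_map_left (f : Module.Dual K V) (φ : U →ₗ[K] V) (x : U ⊗[K] W) :
    contractFst f (map φ LinearMap.id x) = contractFst (φ.dualMap f) x := by
  induction x using TensorProduct.induction_on with
  | zero => simp
  | tmul u w => simp
  | add x y hx hy => simp [hx, hy]

lemma eq_zero_of_forall_contractFst_eq_zero (x : V ⊗[K] W)
    (h : ∀ f : Module.Dual K V, contractFst f x = 0) : x = 0 := by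
  classical
  let b := Module.Basis.ofVectorSpace K V
  apply (equivFinsuppOfBasisLeft b).injective
  ext i
  rw [map_zero, Finsupp.zero_apply, equivFinsuppOfBasisLeft_apply]
  exact h (b.coord i)

noncomputable def contractFstSnd (f : Module.Dual K U) (g : Module.Dual K V) :
    (U ⊗[K] V) ⊗[K] W →ₗ[K] W :=
  contractFst g ∘ₗ contractFst f ∘ₗ (TensorProduct.assoc K U V W).toLinearMap

@[simp] lemma contractFstSnd_tmul (f : Module.Dual K U) (g : Module.Dual K V) (u : U) (v : V)
    (w : W) : contractFstSnd f g ((u ⊗ₜ[K] v) ⊗ₜ[K] w) = f u • g v • w := by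
  simp [contractFstSnd]

lemma forall_contractFstSnd_eq_zero_iff (x : (U ⊗[K] V) ⊗[K] W) :
    (∀ f g, contractFstSnd f g x = 0) ↔ x = 0 := by
  refine ⟨fun h ↦ ?_, fun hx f g ↦ by rw [hx, map_zero]⟩
  have hassoc : TensorProduct.assoc K U V W x = 0 :=
    eq_zero_of_forall_contractFst_eq_zero _ fun f ↦
      eq_zero_of_forall_contractFst_eq_zero _ fun g ↦ h f g
  simpa using hassoc

lemma comm_sub_comm_self (x : V ⊗[K] V) :
    TensorProduct.comm K V V (x - TensorProduct.comm K V V x)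
      = -(x - TensorProduct.comm K V V x) := by
  rw [map_sub, comm_comm, neg_sub]

end TensorProduct

end Contraction

lemma Tten_apply (s : A ⊗[K] A) (f : Module.Dual K A) : Tten s f = contractFst f s := by
  induction s using TensorProduct.induction_on with
  | zero => simp [Tten]
  | tmul a b => simp [Tten]
  | add x y hx hy => simp only [Tten, map_add, LinearMap.add_apply] at hx hy ⊢; rw [hx, hy]

lemma Tten_sub (s t : A ⊗[K] A) : Tten (s - t) = Tten s - Tten t :=
  map_sub (TensorProduct.lift _) s t

namespace RadInv

variable {m : A →ₗ[K] A →ₗ[K] A} {D : A ⊗[K] A}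

lemma Tten_dualMap_ad (hD : RadInv m D) (a : A) (f : Module.Dual K A) :
    Tten D ((m a - m.flip a).dualMap f) = m (Tten D f) a := by
  rw [Tten_apply, ← contractFst_map_left, ← hD a, contractFst_map_right, Tten_apply,
    LinearMap.flip_apply]

lemma map_flip_eq (hD : RadInv m D) (hanti : TensorProduct.comm K A A D = -D) (a : A) :
    map (m.flip a) LinearMap.id D = map LinearMap.id (m a - m.flip a) D := by
  have h := congrArg (TensorProduct.comm K A A) (hD a)
  rwa [← map_comm, ← map_comm, hanti, map_neg, map_neg, neg_inj] at h

lemma Tten_dualMap_flip (hD : RadInv m D) (hanti : TensorProduct.comm K A A D = -D) (a : A)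
    (f : Module.Dual K A) :
    Tten D ((m.flip a).dualMap f) = m a (Tten D f) - m (Tten D f) a := by
  rw [Tten_apply, ← contractFst_map_left, hD.map_flip_eq hanti, contractFst_map_right,
    Tten_apply]
  rfl

lemma Tten_dualMap_mul (hD : RadInv m D) (hanti : TensorProduct.comm K A A D = -D) (a : A)
    (f : Module.Dual K A) :
    Tten D ((m a).dualMap f) = m a (Tten D f) := by
  conv_lhs => rw [← sub_add_cancel (m a) (m.flip a)]
  rw [LinearMap.dualMap_add_apply, map_add, hD.Tten_dualMap_ad, hD.Tten_dualMap_flip hanti,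
    add_sub_cancel]

end RadInv

section YangBaxter

variable (m : A →ₗ[K] A →ₗ[K] A) (f g : Module.Dual K A)

lemma contractFstSnd_p12_23 (s t : A ⊗[K] A) :
    contractFstSnd f g (p12_23 m (s ⊗ₜ t)) = Tten t ((m (Tten s f)).dualMap g) := by
  simp only [Tten_apply]
  induction s using TensorProduct.induction_on with
  | zero => simp [LinearMap.dualMap_apply']
  | tmul a b =>
    induction t using TensorProduct.induction_on with
    | zero => simp
    | tmul c d => simp [p12_23, mulT, smul_smul]
    | add x y hx hy => simp only [tmul_add, map_add, hx, hy]
  | add x y hx hy =>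
    simp only [add_tmul, map_add, hx, hy, LinearMap.dualMap_add_apply, contractFst_add]

lemma contractFstSnd_p13_23 (s t : A ⊗[K] A) :
    contractFstSnd f g (p13_23 m (s ⊗ₜ t)) = m (Tten s f) (Tten t g) := by
  simp only [Tten_apply]
  induction s using TensorProduct.induction_on with
  | zero => simp
  | tmul a b =>
    induction t using TensorProduct.induction_on with
    | zero => simp
    | tmul c d => simp [p13_23, mulT, smul_smul, mul_comm]
    | add x y hx hy => simp only [tmul_add, map_add, hx, hy]
  | add x y hx hy => simp only [add_tmul, map_add, hx, hy, LinearMap.add_apply]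

lemma contractFstSnd_p12_13 (s t : A ⊗[K] A) :
    contractFstSnd f g (p12_13 m (s ⊗ₜ t))
      = Tten t ((m (Tten (TensorProduct.comm K A A s) g)).dualMap f) := by
  simp only [Tten_apply]
  induction s using TensorProduct.induction_on with
  | zero => simp [LinearMap.dualMap_apply']
  | tmul a b =>
    induction t using TensorProduct.induction_on with
    | zero => simp
    | tmul c d => simp [p12_13, mulT, smul_smul, mul_comm]
    | add x y hx hy => simp only [tmul_add, map_add, hx, hy]
  | add x y hx hy =>
    simp only [add_tmul, map_add, hx, hy, LinearMap.dualMap_add_apply, contractFst_add]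

lemma contractFstSnd_p13_12 (s t : A ⊗[K] A) :
    contractFstSnd f g (p13_12 m (s ⊗ₜ t))
      = Tten s ((m.flip (Tten (TensorProduct.comm K A A t) g)).dualMap f) := by
  simp only [Tten_apply]
  induction s using TensorProduct.induction_on with
  | zero => simp
  | tmul a b =>
    induction t using TensorProduct.induction_on with
    | zero => simp
    | tmul c d => simp [p13_12, mulT, smul_smul, mul_comm]
    | add x y hx hy =>
      simp only [tmul_add, map_add, hx, hy, LinearMap.dualMap_add_apply, contractFst_add]
  | add x y hx hy => simp only [add_tmul, map_add, hx, hy]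

lemma contractFstSnd_ybrac (r : A ⊗[K] A) :
    contractFstSnd f g (ybrac m r)
      = Tten r ((m (Tten r f)).dualMap g) - m (Tten r f) (Tten r g)
        + Tten r ((m (Tten (TensorProduct.comm K A A r) g)).dualMap f)
        - Tten r ((m.flip (Tten (TensorProduct.comm K A A r) g)).dualMap f) := by
  simp only [ybrac, map_sub, map_add, contractFstSnd_p12_23, contractFstSnd_p13_23,
    contractFstSnd_p12_13, contractFstSnd_p13_12]

lemma contractFstSnd_ybrac_of_radInv (r : A ⊗[K] A)
    (hinv : RadInv m (r - TensorProduct.comm K A A r)) :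
    contractFstSnd f g (ybrac m r)
      = Tten (TensorProduct.comm K A A r) ((m (Tten r f)).dualMap g
          + (m (Tten (TensorProduct.comm K A A r) g)
             - m.flip (Tten (TensorProduct.comm K A A r) g)).dualMap f)
        - m (Tten (TensorProduct.comm K A A r) f) (Tten (TensorProduct.comm K A A r) g) := by
  have hmul := hinv.Tten_dualMap_mul (comm_sub_comm_self r) (Tten r f) g
  have had := hinv.Tten_dualMap_ad (Tten (TensorProduct.comm K A A r) g) f
  simp only [Tten_sub, LinearMap.sub_apply, LinearMap.dualMap_sub_apply, map_sub] at hmul had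
  rw [contractFstSnd_ybrac, LinearMap.dualMap_sub_apply, map_add, map_sub]
  linear_combination (norm := module) hmul + had

end YangBaxter

theorem stmt6_general (m : A →ₗ[K] A →ₗ[K] A)
    (r : A ⊗[K] A) (hinv : RadInv m (r - (TensorProduct.comm K A A) r)) :
    IsPYBESol m r ↔
      ∀ f g : Module.Dual K A,
        m (Tten ((TensorProduct.comm K A A) r) f) (Tten ((TensorProduct.comm K A A) r) g)
          = Tten ((TensorProduct.comm K A A) r) ((m (Tten r f)).dualMap g
              + (m (Tten ((TensorProduct.comm K A A) r) g)
                 - m.flip (Tten ((TensorProduct.comm K A A) r) g)).dualMap f) := by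
  rw [IsPYBESol, ← forall_contractFstSnd_eq_zero_iff]
  refine forall₂_congr fun f g ↦ ?_
  rw [contractFstSnd_ybrac_of_radInv m f g r hinv, sub_eq_zero, eq_comm]

theorem stmt6 [FiniteDimensional K A] (m : A →ₗ[K] A →ₗ[K] A) (hm : IsPermMul m)
    (r : A ⊗[K] A) (hinv : RadInv m (r - (TensorProduct.comm K A A) r)) :
    IsPYBESol m r ↔
      ∀ f g : Module.Dual K A,
        m (Tten ((TensorProduct.comm K A A) r) f) (Tten ((TensorProduct.comm K A A) r) g)
          = Tten ((TensorProduct.comm K A A) r) ((m (Tten r f)).dualMap g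
              + (m (Tten ((TensorProduct.comm K A A) r) g)
                 - m.flip (Tten ((TensorProduct.comm K A A) r) g)).dualMap f) :=
  stmt6_general m r hinv

end
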